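/- For every integer n ≥ 0, e_2p_4(n+48) ≡ e_2p_4(n) (mod 2), where e_2p_4(n) is the sum of e_2(λ) over all partitions λ of n with exactly 4 parts. -/

import Mathlib

open Finset

/-- `e_2 p_4(n)`, the sum of the second elementary symmetric polynomial evaluated at
the parts over all partitions of `n` with exactly `4` parts. -/
def e2p4 (n : ℕ) : ℕ :=
  ∑ π ∈ Finset.univ.filter (fun π : Nat.Partition n => Multiset.card π.parts = 4),
    π.parts.esymm 2

/-!
Splitting the partitions of `m + k + 1` into `k + 1` parts according to whether `1` is a part
(remove it) or not (subtract one from every part) expresses the number of such partitions and the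
sum of their `e₂` through the same data for partitions of `m` into `k + 1` parts and of `m + k`
into `k` parts. Modulo 2 the coefficients of this recurrence depend only on the parity of `m`, so
the values for `k = 2, 3, 4` on a window of consecutive arguments evolve by a transition that
depends only on the parity of `n`. The window starts at zero and a finite computation shows it is
zero again after 48 steps, which forces period 48.
-/

namespace Multiset

variable {R : Type*} [CommSemiring R]

theorem esymm_one (s : Multiset R) : s.esymm 1 = s.sum := by
  simp [esymm, powersetCard_one, map_map]

theorem esymm_cons_succ (a : R) (s : Multiset R) (n : ℕ) :
    (a ::ₘ s).esymm (n + 1) = s.esymm (n + 1) + a * s.esymm n := by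
  simp [esymm, powersetCard_cons, map_map, sum_map_mul_left]

theorem esymm_two_cons (a : R) (s : Multiset R) :
    (a ::ₘ s).esymm 2 = s.esymm 2 + a * s.sum := by
  rw [esymm_cons_succ, esymm_one]

theorem esymm_two_map_add_one (s : Multiset R) :
    (s.map (· + 1)).esymm 2 + s.sum = s.esymm 2 + card s * s.sum + (card s).choose 2 := by
  induction s using Multiset.induction_on with
  | empty => simp [esymm]
  | cons a s ih =>
    simp only [map_cons, esymm_two_cons, sum_cons, card_cons, sum_map_add, map_id',
      map_const', sum_replicate, nsmul_eq_mul, mul_one, Nat.choose_succ_succ', Nat.choose_one_right]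
    push_cast
    rw [show ∀ x : R, x + (a + 1) * (s.sum + card s) + (a + s.sum)
      = (x + s.sum) + ((a + 1) * (s.sum + card s) + a) from fun x => by ring, ih]
    ring

end Multiset

def partsOfLength (k n : ℕ) : Finset (Multiset ℕ) :=
  ((univ : Finset n.Partition).filter (fun π => Multiset.card π.parts = k)).image
    Nat.Partition.parts

theorem mem_partsOfLength {k n : ℕ} {s : Multiset ℕ} :
    s ∈ partsOfLength k n ↔ Multiset.card s = k ∧ (∀ a ∈ s, 0 < a) ∧ s.sum = n := by
  simp only [partsOfLength, mem_image, mem_filter, mem_univ, true_and]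
  constructor
  · rintro ⟨π, hk, rfl⟩
    exact ⟨hk, fun a ha => π.parts_pos ha, π.parts_sum⟩
  · rintro ⟨hk, hpos, hsum⟩
    exact ⟨⟨s, hpos _, hsum⟩, hk, rfl⟩

def e2Stats (k n : ℕ) : ℕ × ℕ :=
  (#(partsOfLength k n), ∑ s ∈ partsOfLength k n, s.esymm 2)

theorem e2p4_eq_e2Stats_snd (n : ℕ) : e2p4 n = (e2Stats 4 n).2 := by
  rw [e2Stats, partsOfLength, sum_image fun _ _ _ _ h => Nat.Partition.ext h]
  rfl

theorem partsOfLength_eq_empty {k n : ℕ} (h : n < k) : partsOfLength k n = ∅ := by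
  refine eq_empty_of_forall_notMem fun s hs => ?_
  obtain ⟨hk, hpos, hsum⟩ := mem_partsOfLength.mp hs
  have : Multiset.card s ≤ s.sum := by
    simpa using Multiset.card_nsmul_le_sum (s := s) (a := 1) (fun a ha => hpos a ha)
  omega

theorem partsOfLength_one (n : ℕ) : partsOfLength 1 (n + 1) = {{n + 1}} := by
  ext s
  simp only [mem_partsOfLength, mem_singleton, Multiset.card_eq_one]
  constructor
  · rintro ⟨⟨a, rfl⟩, -, hsum⟩
    simpa using hsum
  · rintro rfl
    simp

theorem partsOfLength_succ (k m : ℕ) :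
    partsOfLength (k + 1) (m + k + 1) =
      (partsOfLength (k + 1) m).image (Multiset.map (· + 1)) ∪
        (partsOfLength k (m + k)).image (1 ::ₘ ·) := by
  ext s
  simp only [mem_union, mem_image, mem_partsOfLength]
  constructor
  · rintro ⟨hk, hpos, hsum⟩
    by_cases h1 : 1 ∈ s
    · right
      refine ⟨s.erase 1, ⟨?_, fun a ha => hpos a (Multiset.mem_of_mem_erase ha), ?_⟩,
        Multiset.cons_erase h1⟩
      · simp [Multiset.card_erase_of_mem h1, hk]
      · have := Multiset.sum_erase h1
        omega
    · left
      have hs : (s.map (· - 1)).map (· + 1) = s := by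
        rw [Multiset.map_map]
        refine (Multiset.map_congr rfl fun a ha => ?_).trans (Multiset.map_id s)
        have := hpos a ha
        simp only [Function.comp_apply, id]
        omega
      refine ⟨s.map (· - 1), ⟨by simp [hk], fun a ha => ?_, ?_⟩, hs⟩
      · obtain ⟨b, hb, rfl⟩ := Multiset.mem_map.mp ha
        have := hpos b hb
        have : b ≠ 1 := fun h => h1 (h ▸ hb)
        omega
      · have := congrArg Multiset.sum hs
        simp only [Multiset.sum_map_add, Multiset.map_id', Multiset.map_const',
          Multiset.sum_replicate, Multiset.card_map, smul_eq_mul, mul_one, hk, hsum] at this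
        omega
  · rintro (⟨t, ⟨hk, hpos, hsum⟩, rfl⟩ | ⟨t, ⟨hk, hpos, hsum⟩, rfl⟩)
    · refine ⟨by simp [hk], by simp, ?_⟩
      simp [Multiset.sum_map_add, hk, hsum]
      omega
    · refine ⟨by simp [hk], ?_, by simp [hsum]; omega⟩
      simpa using hpos

theorem disjoint_partsOfLength_image (j k m n : ℕ) :
    Disjoint ((partsOfLength j m).image (Multiset.map (· + 1)))
      ((partsOfLength k n).image (1 ::ₘ ·)) := by
  refine disjoint_left.mpr ?_
  simp only [mem_image, mem_partsOfLength, not_exists, not_and]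
  rintro _ ⟨t, ⟨-, hpos, -⟩, rfl⟩ t' - h
  obtain ⟨a, ha, ha1⟩ := Multiset.mem_map.mp (h ▸ Multiset.mem_cons_self 1 t')
  exact (hpos a ha).ne' (by omega)

/-- Adding one to each part of a partition of `m` into `k + 1` parts raises `e₂` by
`k * m + (k + 1).choose 2`; adjoining a part `1` to a partition of `m + k` raises it by `m + k`. -/
def e2StatsStep {R : Type*} [CommSemiring R] (k : ℕ) (m : R) (u v : R × R) : R × R :=
  (u.1 + v.1, u.2 + (k * m + (k + 1).choose 2) * u.1 + v.2 + (m + k) * v.1)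

theorem e2Stats_add_succ (k m : ℕ) :
    e2Stats (k + 1) (m + k + 1) = e2StatsStep k m (e2Stats (k + 1) m) (e2Stats k (m + k)) := by
  have hmap : Function.Injective (Multiset.map (· + 1)) :=
    Multiset.map_injective (add_left_injective 1)
  have hcons : Function.Injective (1 ::ₘ ·) := fun _ _ => (Multiset.cons_inj_right 1).1
  have hdisj := disjoint_partsOfLength_image (k + 1) k m (m + k)
  simp only [e2Stats, e2StatsStep, partsOfLength_succ, card_union_of_disjoint hdisj,
    card_image_of_injective _ hmap, card_image_of_injective _ hcons, sum_union hdisj,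
    sum_image fun _ _ _ _ h => hmap h, sum_image fun _ _ _ _ h => hcons h, Prod.mk.injEq,
    Nat.cast_id, true_and]
  have hsucc : ∀ t ∈ partsOfLength (k + 1) m,
      (t.map (· + 1)).esymm 2 = t.esymm 2 + (k * m + (k + 1).choose 2) := by
    intro t ht
    obtain ⟨hk, -, hsum⟩ := mem_partsOfLength.mp ht
    have := t.esymm_two_map_add_one
    rw [hk, hsum, Nat.choose_succ_succ', Nat.choose_one_right] at this
    rw [Nat.choose_succ_succ', Nat.choose_one_right]
    push_cast at this
    linarith
  have hone : ∀ t ∈ partsOfLength k (m + k), (1 ::ₘ t).esymm 2 = t.esymm 2 + (m + k) := by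
    intro t ht
    rw [Multiset.esymm_two_cons, (mem_partsOfLength.mp ht).2.2, one_mul]
  rw [sum_congr rfl hsucc, sum_congr rfl hone]
  simp only [sum_add_distrib, sum_const, smul_eq_mul]
  ring

theorem e2Stats_of_lt {k n : ℕ} (h : n < k) : e2Stats k n = 0 := by
  simp [e2Stats, partsOfLength_eq_empty h]

theorem e2Stats_one_succ (n : ℕ) : e2Stats 1 (n + 1) = (1, 0) := by
  simp [e2Stats, partsOfLength_one, Multiset.esymm, Multiset.powersetCard_eq_empty]

theorem map_e2StatsStep {R S : Type*} [CommSemiring R] [CommSemiring S] (f : R →+* S) (k : ℕ)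
    (m : R) (u v : R × R) :
    (e2StatsStep k m u v).map f f = e2StatsStep k (f m) (u.map f f) (v.map f f) := by
  simp [e2StatsStep]

def e2StatsModTwo (k n : ℕ) : ZMod 2 × ZMod 2 := (e2Stats k n).map (↑) (↑)

theorem e2StatsModTwo_add_succ (k m : ℕ) :
    e2StatsModTwo (k + 1) (m + k + 1) =
      e2StatsStep k (m : ZMod 2) (e2StatsModTwo (k + 1) m) (e2StatsModTwo k (m + k)) := by
  rw [e2StatsModTwo, e2Stats_add_succ]
  exact map_e2StatsStep (Nat.castRingHom (ZMod 2)) k m _ _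

abbrev Window : Type :=
  (Fin 2 → ZMod 2 × ZMod 2) × (Fin 3 → ZMod 2 × ZMod 2) × (Fin 4 → ZMod 2 × ZMod 2)

def window (n : ℕ) : Window :=
  (fun i => e2StatsModTwo 2 (n + i), fun i => e2StatsModTwo 3 (n + i),
    fun i => e2StatsModTwo 4 (n + i))

-- Level `1` is only needed at `n + 1`, where it is `(1, 0)`; the new value of level `j` at
-- `n + j` uses level `j - 1` at `n + j - 1`, computed just before it.
def windowStep (t : ZMod 2) (w : Window) : Window :=
  let a := e2StatsStep 1 t (w.1 0) (1, 0)
  let b := e2StatsStep 2 t (w.2.1 0) a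
  let c := e2StatsStep 3 t (w.2.2 0) b
  (![w.1 1, a], ![w.2.1 1, w.2.1 2, b], ![w.2.2 1, w.2.2 2, w.2.2 3, c])

theorem window_succ (n : ℕ) : window (n + 1) = windowStep n (window n) := by
  have h2 : e2StatsModTwo 2 (n + 2) = e2StatsStep 1 (n : ZMod 2) (e2StatsModTwo 2 n) (1, 0) := by
    rw [e2StatsModTwo_add_succ 1 n]
    simp [e2StatsModTwo, e2Stats_one_succ]
  have h3 : e2StatsModTwo 3 (n + 3) =
      e2StatsStep 2 (n : ZMod 2) (e2StatsModTwo 3 n) (e2StatsModTwo 2 (n + 2)) :=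
    e2StatsModTwo_add_succ 2 n
  have h4 : e2StatsModTwo 4 (n + 4) =
      e2StatsStep 3 (n : ZMod 2) (e2StatsModTwo 4 n) (e2StatsModTwo 3 (n + 3)) :=
    e2StatsModTwo_add_succ 3 n
  refine Prod.ext ?_ (Prod.ext ?_ ?_) <;> funext i <;> fin_cases i <;>
    simp [window, windowStep, add_assoc, h2, h3, h4]

theorem window_zero : window 0 = 0 := by
  refine Prod.ext ?_ (Prod.ext ?_ ?_) <;> funext i <;>
    simp [window, e2StatsModTwo, e2Stats_of_lt i.isLt, Prod.ext_iff]

theorem periodic_of_step {α : Type*} {x : ℕ → α} {T : ℕ → α → α} {p : ℕ}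
    (hT : Function.Periodic T p) (hx : ∀ n, x (n + 1) = T n (x n)) (hp : x p = x 0) :
    Function.Periodic x p := by
  intro n
  induction n with
  | zero => simpa using hp
  | succ n ih => rw [Nat.add_right_comm, hx, hx, hT, ih]

theorem eq_foldl_of_step {α : Type*} {x : ℕ → α} {T : ℕ → α → α}
    (hx : ∀ n, x (n + 1) = T n (x n)) (n : ℕ) :
    x n = (List.range n).foldl (fun a i => T i a) (x 0) := by
  induction n with
  | zero => rfl
  | succ n ih => rw [List.range_succ, List.foldl_append, ← ih, hx]; rfl

set_option maxRecDepth 10000 in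
theorem window_periodic : Function.Periodic window 48 := by
  refine periodic_of_step (T := fun n => windowStep n) (fun n => ?_) window_succ ?_
  · simp only [Nat.cast_add]
    rw [show ((48 : ℕ) : ZMod 2) = 0 by decide, add_zero]
  · rw [eq_foldl_of_step window_succ, window_zero]
    decide

theorem e2p4_period_mod_two (n : ℕ) : e2p4 (n + 48) ≡ e2p4 n [MOD 2] := by
  have h := congrArg (fun w : Window => (w.2.2 0).2) (window_periodic n)
  simp only [window, e2StatsModTwo, Prod.map_snd, Fin.coe_ofNat_eq_mod] at h
  rw [e2p4_eq_e2Stats_snd, e2p4_eq_e2Stats_snd]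
  exact (ZMod.natCast_eq_natCast_iff _ _ _).mp h
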